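/- Let L, F be matrices (or matrix-valued analytic functions on a strip of width r') with ‖L‖ ≤ δ ≤ 1/4 and |F|_{r'} ≤ ε ≤ 1/4. Then there exists f₊ (matrix-valued, analytic on the same strip) with e^{L + F(θ)} = e^{L} e^{f₊(θ)} and |f₊|_{r'} ≤ 2 |F|_{r'}. -/

import Mathlib

open scoped Matrix
attribute [local instance] Matrix.linftyOpNormedAddCommGroup Matrix.linftyOpNormedRing
  Matrix.linftyOpNormedAlgebra

/-!
Differentiating `t ↦ e^{-tL} e^{t(L+F)}` gives `e^{-tL} F e^{t(L+F)}`, of norm at most `‖F‖ e^{ct}`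
with `c = 2‖L‖ + ‖F‖ ≤ 3/4`; comparing with `‖F‖ (e^{ct} - 1) / c` bounds `X := e^{-L} e^{L+F} - 1`
by `‖F‖ (e^{3/4} - 1) / (3/4) ≤ 3/2 ‖F‖`. Then `f₊ := log (1 + X)`, the logarithm series taken in
the closed commutative subalgebra generated by `X`, satisfies `e^{f₊} = 1 + X` because
`t ↦ e^{-log (1 + tX)} (1 + tX)` has zero derivative, and `‖f₊‖ ≤ s + s² / (2 (1 - s)) ≤ 2 ‖F‖`
for `s = ‖X‖ ≤ 3/8`.
-/

open NormedSpace

section Duhamel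

variable {𝔸 : Type*} [NormedRing 𝔸] [NormedAlgebra ℝ 𝔸]

lemma norm_exp_le_exp_norm [NormOneClass 𝔸] (x : 𝔸) : ‖exp x‖ ≤ Real.exp ‖x‖ := by
  rw [exp_eq_tsum ℝ, Real.exp_eq_exp_ℝ, exp_eq_tsum_div]
  refine tsum_of_norm_bounded (Real.summable_pow_div_factorial ‖x‖).hasSum fun n => ?_
  rw [norm_smul, norm_inv, Real.norm_natCast, div_eq_inv_mul]
  gcongr
  exact norm_pow_le x n

variable [CompleteSpace 𝔸]

lemma hasDerivAt_exp_smul_neg_mul_exp_smul_add (L F : 𝔸) (t : ℝ) :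
    HasDerivAt (fun s : ℝ => exp (s • -L) * exp (s • (L + F)))
      (exp (t • -L) * F * exp (t • (L + F))) t := by
  refine ((hasDerivAt_exp_smul_const (-L) t).mul
    (hasDerivAt_exp_smul_const' (L + F) t)).congr_deriv ?_
  noncomm_ring

lemma norm_exp_neg_mul_exp_add_sub_one_le [NormOneClass 𝔸] (L F : 𝔸) {c : ℝ} (hc : 0 < c)
    (hLF : 2 * ‖L‖ + ‖F‖ ≤ c) : ‖exp (-L) * exp (L + F) - 1‖ ≤ ‖F‖ * (Real.exp c - 1) / c := by
  have hderiv (t : ℝ) := (hasDerivAt_exp_smul_neg_mul_exp_smul_add L F t).sub_const 1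
  have hB (t : ℝ) : HasDerivAt (fun s : ℝ => ‖F‖ * (Real.exp (c * s) - 1) / c)
      (‖F‖ * Real.exp (c * t)) t := by
    refine ((((hasDerivAt_id t).const_mul c).exp.sub_const 1).const_mul ‖F‖).div_const c
      |>.congr_deriv ?_
    field_simp
    rfl
  have hbound (t : ℝ) (ht : t ∈ Set.Ico (0 : ℝ) 1) :
      ‖exp (t • -L) * F * exp (t • (L + F))‖ ≤ ‖F‖ * Real.exp (c * t) := by
    have ht0 : 0 ≤ t := ht.1
    calc ‖exp (t • -L) * F * exp (t • (L + F))‖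
        ≤ ‖exp (t • -L)‖ * ‖F‖ * ‖exp (t • (L + F))‖ := norm_mul₃_le
      _ ≤ Real.exp (t * ‖L‖) * ‖F‖ * Real.exp (t * (‖L‖ + ‖F‖)) := by
        gcongr
        · refine (norm_exp_le_exp_norm _).trans ?_
          rw [norm_smul, norm_neg, Real.norm_of_nonneg ht0]
        · refine (norm_exp_le_exp_norm _).trans ?_
          rw [norm_smul, Real.norm_of_nonneg ht0]
          gcongr
          exact norm_add_le L F
      _ = ‖F‖ * Real.exp (t * (2 * ‖L‖ + ‖F‖)) := by rw [mul_right_comm, ← Real.exp_add]; ring_nf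
      _ ≤ ‖F‖ * Real.exp (c * t) := by rw [mul_comm c]; gcongr
  simpa using image_norm_le_of_norm_deriv_right_le_deriv_boundary
    (fun t _ => (hderiv t).continuousAt.continuousWithinAt)
    (fun t _ => (hderiv t).hasDerivWithinAt) (by simp) hB hbound
    (Set.right_mem_Icc.2 zero_le_one)

end Duhamel

section LogOnePlus

variable {𝔸 : Type*} [NormedRing 𝔸] [NormedAlgebra ℝ 𝔸]

noncomputable def logOnePlus (x : 𝔸) : 𝔸 :=
  ∑' n : ℕ, ((-1 : ℝ) ^ n / (n + 1)) • x ^ (n + 1)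

lemma logOnePlus_zero : logOnePlus (0 : 𝔸) = 0 := by
  simp [logOnePlus]

lemma norm_logOnePlus_term_le (x : 𝔸) (n : ℕ) :
    ‖((-1 : ℝ) ^ n / (n + 1)) • x ^ (n + 1)‖ ≤ ‖x‖ ^ (n + 1) / (n + 1) := by
  rw [norm_smul, norm_div, norm_pow, norm_neg, norm_one, one_pow, div_mul_eq_mul_div, one_mul,
    Real.norm_of_nonneg (by positivity)]
  gcongr
  exact norm_pow_le' x n.succ_pos

lemma neg_smul_pow_mul_self (x : 𝔸) (t : ℝ) (n : ℕ) :
    (-(t • x)) ^ n * x = (-t) ^ n • x ^ (n + 1) := by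
  rw [← neg_smul, smul_pow, smul_mul_assoc, ← pow_succ]

variable [CompleteSpace 𝔸]

lemma norm_logOnePlus_le {x : 𝔸} (hx : ‖x‖ < 1) :
    ‖logOnePlus x‖ ≤ ‖x‖ + ‖x‖ ^ 2 / (2 * (1 - ‖x‖)) := by
  have hx0 : 0 ≤ ‖x‖ := norm_nonneg x
  have hsummable : Summable fun n : ℕ => ((-1 : ℝ) ^ n / (n + 1)) • x ^ (n + 1) := by
    refine .of_norm_bounded ((summable_geometric_of_lt_one hx0 hx).mul_left ‖x‖) fun n => ?_
    refine (norm_logOnePlus_term_le x n).trans ?_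
    rw [pow_succ', div_le_iff₀ (by positivity)]
    exact le_mul_of_one_le_right (by positivity) (by linarith [n.cast_nonneg (α := ℝ)])
  have htail : HasSum (fun n : ℕ => ‖x‖ ^ 2 / 2 * ‖x‖ ^ n) (‖x‖ ^ 2 / 2 * (1 - ‖x‖)⁻¹) :=
    (hasSum_geometric_of_lt_one hx0 hx).mul_left _
  have htail_le (n : ℕ) : ‖((-1 : ℝ) ^ (n + 1) / ((n + 1 : ℕ) + 1)) • x ^ (n + 1 + 1)‖
      ≤ ‖x‖ ^ 2 / 2 * ‖x‖ ^ n := by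
    refine (norm_logOnePlus_term_le x (n + 1)).trans ?_
    rw [div_le_iff₀ (by positivity),
      show ‖x‖ ^ 2 / 2 * ‖x‖ ^ n * ((n + 1 : ℕ) + 1) = ‖x‖ ^ (n + 1 + 1) * (1 + n / 2) by
        push_cast; ring]
    exact le_mul_of_one_le_right (by positivity) (by linarith [n.cast_nonneg (α := ℝ)])
  rw [logOnePlus, hsummable.tsum_eq_zero_add]
  calc _ ≤ ‖((-1 : ℝ) ^ 0 / ((0 : ℕ) + 1)) • x ^ (0 + 1)‖
        + ‖∑' n : ℕ, ((-1 : ℝ) ^ (n + 1) / ((n + 1 : ℕ) + 1)) • x ^ (n + 1 + 1)‖ := norm_add_le _ _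
    _ ≤ ‖x‖ + ‖x‖ ^ 2 / 2 * (1 - ‖x‖)⁻¹ := by
      gcongr
      · simp
      · exact tsum_of_norm_bounded htail htail_le
    _ = ‖x‖ + ‖x‖ ^ 2 / (2 * (1 - ‖x‖)) := by rw [div_mul_eq_div_div, div_eq_mul_inv (_ / 2)]

lemma hasDerivAt_logOnePlus_smul {x : 𝔸} {R t : ℝ} (hR : R * ‖x‖ < 1) (ht : |t| < R) :
    HasDerivAt (fun s : ℝ => logOnePlus (s • x)) ((∑' n : ℕ, (-(t • x)) ^ n) * x) t := by
  have hterm (n : ℕ) (s : ℝ) :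
      HasDerivAt (fun u : ℝ => ((-1 : ℝ) ^ n / (n + 1)) • (u • x) ^ (n + 1))
        ((-(s • x)) ^ n * x) s := by
    simp_rw [smul_pow, smul_smul, neg_smul_pow_mul_self]
    refine (((hasDerivAt_pow (n + 1) s).const_mul ((-1 : ℝ) ^ n / (n + 1))).smul_const
      (x ^ (n + 1))).congr_deriv ?_
    congr 1
    push_cast
    rw [neg_pow s]
    field_simp
  have hR0 : 0 < R := (abs_nonneg t).trans_lt ht
  have hbound (n : ℕ) (s : ℝ) (hs : s ∈ Metric.ball (0 : ℝ) R) :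
      ‖(-(s • x)) ^ n * x‖ ≤ (R * ‖x‖) ^ n * ‖x‖ := by
    rw [Metric.mem_ball, dist_zero_right, Real.norm_eq_abs] at hs
    rw [neg_smul_pow_mul_self, norm_smul, norm_pow, norm_neg, Real.norm_eq_abs, mul_pow, mul_assoc,
      ← pow_succ]
    have := norm_pow_le' x n.succ_pos
    gcongr
  have hgeom : Summable fun n : ℕ => (-(t • x)) ^ n := by
    refine summable_geometric_of_norm_lt_one ?_
    rw [norm_neg, norm_smul, Real.norm_eq_abs]
    exact lt_of_le_of_lt (by gcongr) hR
  have := hasDerivAt_tsum_of_isPreconnected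
    ((summable_geometric_of_lt_one (by positivity) hR).mul_right ‖x‖) Metric.isOpen_ball
    (convex_ball (0 : ℝ) R).isPreconnected (fun n s _ => hterm n s) hbound
    (Metric.mem_ball_self hR0) (by simp) (by simpa using ht)
  rwa [hgeom.tsum_mul_right] at this

end LogOnePlus

lemma exp_logOnePlus {𝔸 : Type*} [NormedCommRing 𝔸] [NormedAlgebra ℝ 𝔸] [CompleteSpace 𝔸]
    {x : 𝔸} (hx : ‖x‖ < 1) : exp (logOnePlus x) = 1 + x := by
  let := NormedAlgebra.restrictScalars ℚ ℝ 𝔸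
  set R : ℝ := 2 / (1 + ‖x‖)
  have hR1 : 1 < R := by rw [lt_div_iff₀ (by positivity)]; linarith
  have hRx : R * ‖x‖ < 1 := by rw [div_mul_eq_mul_div, div_lt_one (by positivity)]; linarith
  let h : ℝ → 𝔸 := fun s => exp (-logOnePlus (s • x)) * (1 + s • x)
  have hderiv (t : ℝ) (ht : t ∈ Metric.ball 0 R) : HasDerivAt h 0 t := by
    rw [Metric.mem_ball, dist_zero_right, Real.norm_eq_abs] at ht
    have hlog := (hasDerivAt_logOnePlus_smul hRx ht).neg
    have hexp := (hasFDerivAt_exp (𝕂 := ℝ) (x := -logOnePlus (t • x))).comp_hasDerivAt t hlog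
    have hlin : HasDerivAt (fun s : ℝ => 1 + s • x) x t :=
      ((hasDerivAt_id t).smul_const x).const_add 1 |>.congr_deriv (one_smul ℝ x)
    have hgeom : (∑' n : ℕ, (-(t • x)) ^ n) * (1 + t • x) = 1 := by
      simpa using geom_series_mul_neg (-(t • x)) (by
        rw [norm_neg, norm_smul, Real.norm_eq_abs]; exact lt_of_le_of_lt (by gcongr) hRx)
    refine (hexp.mul hlin).congr_deriv ?_
    simp only [smul_apply, one_apply_eq_self, smul_eq_mul, Function.comp_apply, Pi.neg_apply]
    linear_combination -(exp (-logOnePlus (t • x)) * x) * hgeom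
  have hconst : h 1 = h 0 :=
    Metric.isOpen_ball.is_const_of_deriv_eq_zero (convex_ball 0 R).isPreconnected
      (fun t ht => (hderiv t ht).differentiableAt.differentiableWithinAt)
      (fun t ht => (hderiv t ht).deriv) (by simpa using hR1) (by simpa using hR1.trans' one_pos)
  simp only [h, one_smul, zero_smul, logOnePlus_zero, neg_zero, exp_zero, add_zero, mul_one]
    at hconst
  calc exp (logOnePlus x) = exp (logOnePlus x) * (exp (-logOnePlus x) * (1 + x)) := by
        rw [hconst, mul_one]
    _ = 1 + x := by rw [← mul_assoc, ← exp_add, add_neg_cancel, exp_zero, one_mul]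

lemma exists_exp_eq_one_add {𝔸 : Type*} [NormedRing 𝔸] [NormedAlgebra ℝ 𝔸] [CompleteSpace 𝔸]
    {x : 𝔸} (hx : ‖x‖ < 1) :
    ∃ y : 𝔸, exp y = 1 + x ∧ ‖y‖ ≤ ‖x‖ + ‖x‖ ^ 2 / (2 * (1 - ‖x‖)) := by
  let A := Algebra.elemental ℝ x
  let : NormedCommRing A := { SubringClass.toNormedRing A with mul_comm := mul_comm }
  let := NormedAlgebra.restrictScalars ℚ ℝ A
  let := NormedAlgebra.restrictScalars ℚ ℝ 𝔸
  let x' : A := ⟨x, Algebra.elemental.self_mem ℝ x⟩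
  refine ⟨((logOnePlus x' : A) : 𝔸), ?_, norm_logOnePlus_le (x := x') hx⟩
  calc exp ((logOnePlus x' : A) : 𝔸) = A.val (exp (logOnePlus x')) :=
        (map_exp A.val continuous_subtype_val _).symm
    _ = A.val (1 + x') := congrArg A.val (exp_logOnePlus hx)
    _ = 1 + x := rfl

lemma Real.exp_three_quarters_le : Real.exp (3 / 4) ≤ 17 / 8 := by
  refine (Real.exp_bound' (by norm_num) (by norm_num) (n := 4) (by norm_num)).trans ?_
  norm_num [Finset.sum_range_succ, Nat.factorial]

/-- if `‖L‖ ≤ δ ≤ 1/4` and `‖F‖ ≤ ε ≤ 1/4`, then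
`e^{L+F} = e^L e^{f₊}` for some `f₊` with `‖f₊‖ ≤ 2‖F‖`. -/
theorem stmt_14 (L F : Matrix (Fin 2) (Fin 2) ℂ) (δ ε : ℝ)
    (hL : ‖L‖ ≤ δ) (hδ : δ ≤ 1 / 4)
    (hF : ‖F‖ ≤ ε) (hε : ε ≤ 1 / 4) :
    ∃ fplus : Matrix (Fin 2) (Fin 2) ℂ,
      NormedSpace.exp (L + F) = NormedSpace.exp L * NormedSpace.exp fplus ∧
      ‖fplus‖ ≤ 2 * ‖F‖ := by
  set X := exp (-L) * exp (L + F) - 1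
  have hF4 : ‖F‖ ≤ 1 / 4 := hF.trans hε
  have hXF : ‖X‖ ≤ 3 / 2 * ‖F‖ := by
    refine (norm_exp_neg_mul_exp_add_sub_one_le L F (c := 3 / 4) (by norm_num)
      (by linarith)).trans ?_
    rw [div_le_iff₀ (by norm_num)]
    nlinarith [norm_nonneg F, Real.exp_three_quarters_le]
  have hX38 : ‖X‖ ≤ 3 / 8 := by linarith
  obtain ⟨y, hy, hy_norm⟩ := exists_exp_eq_one_add (x := X) (by linarith)
  refine ⟨y, ?_, hy_norm.trans ?_⟩
  · calc exp (L + F) = exp L * (exp (-L) * exp (L + F)) := by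
          rw [← mul_assoc, ← Matrix.exp_add_of_commute _ _ (Commute.refl L).neg_right,
            add_neg_cancel, exp_zero, one_mul]
      _ = exp L * exp y := congrArg (exp L * ·) (hy.trans (add_sub_cancel 1 _)).symm
  · have hsq : ‖X‖ ^ 2 / (2 * (1 - ‖X‖)) ≤ 4 / 5 * ‖X‖ ^ 2 := by
      rw [div_le_iff₀ (by linarith)]
      nlinarith [sq_nonneg ‖X‖]
    nlinarith [norm_nonneg X, norm_nonneg F]
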